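/- arXiv:1205.5189 — 7 statements merged into one kernel-verified Lean document; each statement's English description precedes it below -/
import Mathlib

section
/- Let p > 1, let a < b be real numbers, and let f : [a, b] → [0, ∞) be a Young-convex function (with parameter p) on [a, b] that is integrable on [a, b]. Then (1/(b−a)) ∫ₐᵇ f(x) dx ≤ (p² + 2p)/((p+1)(2p+1)) · f(a) + 3p²/((p+1)(2p+1)) · f(b). -/
open MeasureTheory intervalIntegral Set

theorem young_convex_hadamard_right (p a b : ℝ) (hp : 1 < p) (hab : a < b)
    (f : ℝ → ℝ)
    (hf0 : ∀ x ∈ Set.Icc a b, 0 ≤ f x)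
    (hf : ∀ x ∈ Set.Icc a b, ∀ y ∈ Set.Icc a b, ∀ t : ℝ, 0 < t → t ≤ 1 →
      f (t * x + (1 - t) * y) ≤
        ((1 / p) * t ^ (1 / p) + ((p - 1) / p) * t ^ (1 + 1 / p)) * f x +
        (((p - 1) / p) * (1 - t) * t ^ (1 / p) + (1 / p) * t ^ (1 / p - 1) * (1 - t)) * f y)
    (hint : IntervalIntegrable f MeasureTheory.volume a b) :
    (1 / (b - a)) * ∫ x in a..b, f x ≤
      ((p ^ 2 + 2 * p) / ((p + 1) * (2 * p + 1))) * f a +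
      (3 * p ^ 2 / ((p + 1) * (2 * p + 1))) * f b := by
  have hp0 : 0 < p := lt_trans one_pos hp
  have hc : a - b ≠ 0 := by linarith
  have hq0 : 0 < 1 / p := by positivity
  have hq1 : 1 / p < 1 := by rw [div_lt_one hp0]; exact hp
  -- the composed function
  set g : ℝ → ℝ := fun t => f ((a - b) * t + b) with hg
  -- substitution identity
  have hsub : ∫ t in (0:ℝ)..1, g t = (b - a)⁻¹ * ∫ x in a..b, f x := by
    rw [intervalIntegral.integral_comp_mul_add f hc b]
    simp only [mul_zero, zero_add, mul_one]
    rw [show (a - b) + b = a by ring, intervalIntegral.integral_symm a b]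
    have hinv : (a - b)⁻¹ = -(b - a)⁻¹ := by
      rw [show a - b = -(b - a) by ring, inv_neg]
    rw [smul_eq_mul, hinv]; ring
  -- integrability of g on [0,1]
  have hgint : IntervalIntegrable g volume 0 1 := by
    have h1 : IntervalIntegrable (fun x => f (x + b)) volume (a - b) 0 := by
      simpa using hint.comp_add_right b
    have h2 := (IntervalIntegrable.comp_mul_left
      (f := fun x => f (x + b)) (c := a - b) h1)
    simp only [div_self hc, zero_div] at h2
    exact h2.symm
  -- rpow integrals
  have Iint : ∀ r : ℝ, -1 < r → IntervalIntegrable (fun t : ℝ => t ^ r) volume 0 1 :=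
    fun r hr => intervalIntegral.intervalIntegrable_rpow' hr
  have Ival : ∀ r : ℝ, -1 < r → (∫ t in (0:ℝ)..1, t ^ r) = 1 / (r + 1) := by
    intro r hr
    rw [integral_rpow (Or.inl hr), Real.one_rpow,
      Real.zero_rpow (by linarith : r + 1 ≠ 0)]
    ring
  -- the bounding function, written as a combination of pure powers
  set R : ℝ → ℝ := fun t =>
    (f a / p) * t ^ (1 / p) + ((p - 1) / p * f a) * t ^ (1 + 1 / p) +
    ((p - 1) / p * f b) * (t ^ (1 / p) - t ^ (1 + 1 / p)) +
    (f b / p) * (t ^ (1 / p - 1) - t ^ (1 / p)) with hR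
  have hRint : IntervalIntegrable R volume 0 1 := by
    apply IntervalIntegrable.add
    apply IntervalIntegrable.add
    apply IntervalIntegrable.add
    · exact (Iint _ (by linarith)).const_mul _
    · exact (Iint _ (by linarith)).const_mul _
    · exact ((Iint _ (by linarith)).sub (Iint _ (by linarith))).const_mul _
    · exact ((Iint _ (by linarith)).sub (Iint _ (by linarith))).const_mul _
  -- pointwise a.e. bound on [0,1]
  have hbound : ∫ t in (0:ℝ)..1, g t ≤ ∫ t in (0:ℝ)..1, R t := by
    apply intervalIntegral.integral_mono_ae_restrict zero_le_one hgint hRint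
    have h0 : ∀ᵐ t ∂(volume.restrict (Set.Icc (0:ℝ) 1)), t ≠ 0 := by
      refine (ae_restrict_of_ae ?_)
      simp [ae_iff, Real.volume_singleton, Set.setOf_eq_eq_singleton']
    filter_upwards [h0, ae_restrict_mem measurableSet_Icc] with t ht0 htmem
    obtain ⟨ht0', ht1⟩ := htmem
    have htpos : 0 < t := lt_of_le_of_ne ht0' (Ne.symm ht0)
    have key := hf a (Set.left_mem_Icc.mpr hab.le) b (Set.right_mem_Icc.mpr hab.le)
      t htpos ht1
    have heq : (a - b) * t + b = t * a + (1 - t) * b := by ring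
    have hRt : ((1 / p) * t ^ (1 / p) + ((p - 1) / p) * t ^ (1 + 1 / p)) * f a +
        (((p - 1) / p) * (1 - t) * t ^ (1 / p) + (1 / p) * t ^ (1 / p - 1) * (1 - t)) * f b
        = R t := by
      have e1 : t * t ^ (1 / p) = t ^ (1 + 1 / p) := by
        rw [Real.rpow_add htpos, Real.rpow_one]
      have e2 : t * t ^ (1 / p - 1) = t ^ (1 / p) := by
        rw [Real.rpow_sub htpos, Real.rpow_one]
        field_simp
      simp only [hR]
      linear_combination (-((p - 1) / p * f b)) * e1 + (-(f b / p)) * e2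
    calc g t ≤ _ := by rw [hg]; simp only; rw [heq]; exact key
      _ = R t := hRt
  -- value of ∫ R
  have hRval : ∫ t in (0:ℝ)..1, R t =
      ((p ^ 2 + 2 * p) / ((p + 1) * (2 * p + 1))) * f a +
      (3 * p ^ 2 / ((p + 1) * (2 * p + 1))) * f b := by
    have h1 : (-1:ℝ) < 1 / p := by linarith
    have h2 : (-1:ℝ) < 1 + 1 / p := by linarith
    have h3 : (-1:ℝ) < 1 / p - 1 := by linarith
    simp only [hR]
    rw [intervalIntegral.integral_add, intervalIntegral.integral_add,
      intervalIntegral.integral_add]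
    · rw [intervalIntegral.integral_const_mul, intervalIntegral.integral_const_mul,
        intervalIntegral.integral_const_mul, intervalIntegral.integral_const_mul,
        intervalIntegral.integral_sub (Iint _ h1) (Iint _ h2),
        intervalIntegral.integral_sub (Iint _ h3) (Iint _ h1),
        Ival _ h1, Ival _ h2, Ival _ h3]
      have hne1 : (1:ℝ)/p + 1 ≠ 0 := by positivity
      have hne2 : (1:ℝ) + 1/p + 1 ≠ 0 := by positivity
      have hne3 : (1:ℝ)/p - 1 + 1 ≠ 0 := by rw [sub_add_cancel]; positivity
      have hp1 : (p:ℝ) + 1 ≠ 0 := by positivity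
      have hp2 : (2*p:ℝ) + 1 ≠ 0 := by positivity
      field_simp
      ring
    · exact (Iint _ h1).const_mul _
    · exact (Iint _ h2).const_mul _
    · exact ((Iint _ h1).const_mul _).add ((Iint _ h2).const_mul _)
    · exact ((Iint _ h1).sub (Iint _ h2)).const_mul _
    · exact (((Iint _ h1).const_mul _).add ((Iint _ h2).const_mul _)).add
        (((Iint _ h1).sub (Iint _ h2)).const_mul _)
    · exact ((Iint _ h3).sub (Iint _ h1)).const_mul _
  rw [one_div, ← hsub]
  rw [hRval] at hbound
  exact hbound
end

section
/- Let p > 1, let a < b be real numbers, and let f : [a, b] → [0, ∞) be a Young-convex function (with parameter p) on [a, b] that is integrable on [a, b]. Then 2^(1/p) · (p/(p+1)) · f((a+b)/2) ≤ (1/(b−a)) ∫ₐᵇ f(x) dx ≤ [ p(p+2)/((p+1)(2p+1)) + ((p−1)/p)·B((1+p)/p, 2) + (1/p)·B(1/p, 2) ] · (f(a) + f(b))/2, where B(x, 2) = 1/(x(x+1)) denotes the Euler Beta function at second argument 2; explicitly B((1+p)/p, 2) = p²/((1+p)(1+2p)) and B(1/p, 2) = p²/(1+p), so the right-hand constant in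 brackets equals 2p/(p+1). -/
open MeasureTheory intervalIntegral

/-- Euler Beta function value B(x, 2) = 1/(x(x+1)). -/
noncomputable def beta2 (x : ℝ) : ℝ := 1 / (x * (x + 1))

private lemma rpow_int01 {r : ℝ} (hr : -1 < r) : ∫ t in (0:ℝ)..1, t ^ r = 1 / (r + 1) := by
  rw [integral_rpow (Or.inl hr)]
  rw [Real.one_rpow, Real.zero_rpow (by linarith : r + 1 ≠ 0)]
  ring

private lemma trinom_integrable {r : ℝ} (hr0 : 0 < r) (c₁ c₂ c₃ : ℝ) :
    IntervalIntegrable (fun t => c₁ * t ^ r + c₂ * t ^ (1 + r) + c₃ * t ^ (r - 1))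
      volume 0 1 := by
  apply IntervalIntegrable.add
  apply IntervalIntegrable.add
  · exact (intervalIntegral.intervalIntegrable_rpow' (by linarith)).const_mul c₁
  · exact (intervalIntegral.intervalIntegrable_rpow' (by linarith)).const_mul c₂
  · exact (intervalIntegral.intervalIntegrable_rpow' (by linarith)).const_mul c₃

private lemma trinom_integral {r : ℝ} (hr0 : 0 < r) (c₁ c₂ c₃ : ℝ) :
    ∫ t in (0:ℝ)..1, (c₁ * t ^ r + c₂ * t ^ (1 + r) + c₃ * t ^ (r - 1))
      = c₁ / (r + 1) + c₂ / (r + 2) + c₃ / r := by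
  rw [integral_add (((intervalIntegral.intervalIntegrable_rpow' (by linarith)).const_mul c₁).add
      ((intervalIntegral.intervalIntegrable_rpow' (by linarith)).const_mul c₂))
      ((intervalIntegral.intervalIntegrable_rpow' (by linarith)).const_mul c₃),
    integral_add ((intervalIntegral.intervalIntegrable_rpow' (by linarith)).const_mul c₁)
      ((intervalIntegral.intervalIntegrable_rpow' (by linarith)).const_mul c₂),
    intervalIntegral.integral_const_mul, intervalIntegral.integral_const_mul, intervalIntegral.integral_const_mul,
    rpow_int01 (by linarith), rpow_int01 (by linarith), rpow_int01 (by linarith)]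
  have h1 : 1 + r + 1 = r + 2 := by ring
  have h2 : r - 1 + 1 = r := by ring
  rw [h1, h2]
  ring

/-- Upper-bound step: one-sided estimate for one affine parametrization. -/
private lemma upper_half (p a b x y : ℝ) (hp : 1 < p) (f : ℝ → ℝ)
    (hf : ∀ x ∈ Set.Icc a b, ∀ y ∈ Set.Icc a b, ∀ t : ℝ, 0 < t → t ≤ 1 →
      f (t * x + (1 - t) * y) ≤
        ((1 / p) * t ^ (1 / p) + ((p - 1) / p) * t ^ (1 + 1 / p)) * f x +
        (((p - 1) / p) * (1 - t) * t ^ (1 / p) + (1 / p) * t ^ (1 / p - 1) * (1 - t)) * f y)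
    (hg_int : IntervalIntegrable (fun s => f (s * x + (1 - s) * y)) volume 0 1)
    (hx : x ∈ Set.Icc a b) (hy : y ∈ Set.Icc a b) :
    ∫ s in (0:ℝ)..1, f (s * x + (1 - s) * y) ≤
      ((1/p) * f x + ((p-2)/p) * f y) / (1/p + 1)
      + (((p-1)/p) * (f x - f y)) / (1/p + 2) + ((1/p) * f y) / (1/p) := by
  set r := 1/p with hrdef
  have hp0 : 0 < p := by linarith
  have hr0 : 0 < r := by positivity
  set c₁ := (1/p) * f x + ((p-2)/p) * f y with hc1
  set c₂ := ((p-1)/p) * (f x - f y) with hc2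
  set c₃ := (1/p) * f y with hc3
  have key : ∀ t ∈ Set.Ioc (0:ℝ) 1,
      f (t * x + (1 - t) * y) ≤ c₁ * t ^ r + c₂ * t ^ (1 + r) + c₃ * t ^ (r - 1) := by
    intro t ht
    have ht0 : 0 < t := ht.1
    refine (hf x hx y hy t ht0 ht.2).trans_eq ?_
    have e1 : t ^ (1 + r) = t * t ^ r := by
      rw [Real.rpow_add ht0, Real.rpow_one]
    have e2 : t ^ (r - 1) = t ^ r / t := by
      rw [Real.rpow_sub ht0, Real.rpow_one]
    rw [e1, e2, hc1, hc2, hc3, hrdef]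
    field_simp [hp0.ne', ht0.ne']
    ring
  have hR : IntervalIntegrable (fun t => c₁ * t ^ r + c₂ * t ^ (1 + r) + c₃ * t ^ (r - 1))
      volume 0 1 := trinom_integrable hr0 c₁ c₂ c₃
  have hmono := MeasureTheory.setIntegral_mono_on hg_int.1 hR.1 measurableSet_Ioc key
  rw [← intervalIntegral.integral_of_le (zero_le_one), ← intervalIntegral.integral_of_le
    (zero_le_one)] at hmono
  calc ∫ s in (0:ℝ)..1, f (s * x + (1 - s) * y)
      ≤ ∫ t in (0:ℝ)..1, (c₁ * t ^ r + c₂ * t ^ (1 + r) + c₃ * t ^ (r - 1)) := hmono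
    _ = c₁ / (r + 1) + c₂ / (r + 2) + c₃ / r := trinom_integral hr0 c₁ c₂ c₃

theorem young_convex_hadamard (p a b : ℝ) (hp : 1 < p) (hab : a < b)
    (f : ℝ → ℝ)
    (hf0 : ∀ x ∈ Set.Icc a b, 0 ≤ f x)
    (hf : ∀ x ∈ Set.Icc a b, ∀ y ∈ Set.Icc a b, ∀ t : ℝ, 0 < t → t ≤ 1 →
      f (t * x + (1 - t) * y) ≤
        ((1 / p) * t ^ (1 / p) + ((p - 1) / p) * t ^ (1 + 1 / p)) * f x +
        (((p - 1) / p) * (1 - t) * t ^ (1 / p) + (1 / p) * t ^ (1 / p - 1) * (1 - t)) * f y)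
    (hint : IntervalIntegrable f MeasureTheory.volume a b) :
    (2 : ℝ) ^ (1 / p) * (p / (p + 1)) * f ((a + b) / 2) ≤ (1 / (b - a)) * ∫ x in a..b, f x ∧
    (1 / (b - a)) * ∫ x in a..b, f x ≤
      (p * (p + 2) / ((p + 1) * (2 * p + 1)) + ((p - 1) / p) * beta2 ((1 + p) / p) +
        (1 / p) * beta2 (1 / p)) * ((f a + f b) / 2) := by
  have hp0 : 0 < p := by linarith
  have hba : b - a ≠ 0 := sub_ne_zero.mpr hab.ne'
  have hmem : ∀ s ∈ Set.Icc (0:ℝ) 1, s * a + (1 - s) * b ∈ Set.Icc a b := by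
    intro s hs
    constructor <;> nlinarith [hs.1, hs.2, hab.le]
  have hmem' : ∀ s ∈ Set.Icc (0:ℝ) 1, s * b + (1 - s) * a ∈ Set.Icc a b := by
    intro s hs
    constructor <;> nlinarith [hs.1, hs.2, hab.le]
  have ha : a ∈ Set.Icc a b := Set.left_mem_Icc.mpr hab.le
  have hb : b ∈ Set.Icc a b := Set.right_mem_Icc.mpr hab.le
  -- integrability of both affine compositions
  have hg_int : IntervalIntegrable (fun s => f (s * a + (1 - s) * b)) volume 0 1 := by
    have h2 := (hint.symm.comp_add_right b).comp_mul_left (c := a - b)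
    have hb0 : (b - b) / (a - b) = 0 := by simp
    have ha1 : (a - b) / (a - b) = 1 := div_self (sub_ne_zero.mpr hab.ne)
    rw [hb0, ha1] at h2
    have e : (fun s => f (s * a + (1 - s) * b)) = (fun s => f ((a - b) * s + b)) := by
      funext s; congr 1; ring
    rw [e]; exact h2
  have hh_int : IntervalIntegrable (fun s => f (s * b + (1 - s) * a)) volume 0 1 := by
    have h2 := (hint.comp_add_right a).comp_mul_left (c := b - a)
    have hb0 : (a - a) / (b - a) = 0 := by simp
    have ha1 : (b - a) / (b - a) = 1 := div_self hba
    rw [hb0, ha1] at h2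
    have e : (fun s => f (s * b + (1 - s) * a)) = (fun s => f ((b - a) * s + a)) := by
      funext s; congr 1; ring
    rw [e]; exact h2
  -- values of both integrals
  have hg_eq : ∫ s in (0:ℝ)..1, f (s * a + (1 - s) * b)
      = (1 / (b - a)) * ∫ x in a..b, f x := by
    have e : (fun s => f (s * a + (1 - s) * b)) = (fun s => f ((a - b) * s + b)) := by
      funext s; congr 1; ring
    rw [e]
    rw [intervalIntegral.integral_comp_mul_add f (sub_ne_zero.mpr hab.ne : a - b ≠ 0) b]
    rw [show (a - b) * 0 + b = b by ring, show (a - b) * 1 + b = a by ring]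
    rw [intervalIntegral.integral_symm a b, smul_eq_mul]
    rw [show a - b = -(b - a) by ring, inv_neg, one_div]
    ring
  have hh_eq : ∫ s in (0:ℝ)..1, f (s * b + (1 - s) * a)
      = (1 / (b - a)) * ∫ x in a..b, f x := by
    have e : (fun s => f (s * b + (1 - s) * a)) = (fun s => f ((b - a) * s + a)) := by
      funext s; congr 1; ring
    rw [e]
    rw [intervalIntegral.integral_comp_mul_add f hba a]
    rw [show (b - a) * 0 + a = a by ring, show (b - a) * 1 + a = b by ring, smul_eq_mul]
    field_simp
  set X := (1 / (b - a)) * ∫ x in a..b, f x with hX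
  constructor
  · -- lower bound
    set C := (1/2 : ℝ) ^ (1/p) * ((p + 1) / (2 * p)) with hC
    have hmid : ∀ s ∈ Set.Icc (0:ℝ) 1,
        f ((a + b) / 2) ≤ C * (f (s * a + (1 - s) * b) + f (s * b + (1 - s) * a)) := by
      intro s hs
      have h := hf _ (hmem s hs) _ (hmem' s hs) (1/2) (by norm_num) (by norm_num)
      rw [show (1/2 : ℝ) * (s * a + (1 - s) * b) + (1 - 1/2) * (s * b + (1 - s) * a)
        = (a + b) / 2 by ring] at h
      refine h.trans_eq ?_
      have e1 : (1/2 : ℝ) ^ (1 + 1/p) = (1/2) * (1/2 : ℝ) ^ (1/p) := by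
        rw [Real.rpow_add (by norm_num : (0:ℝ) < 1/2), Real.rpow_one]
      have e2 : (1/2 : ℝ) ^ (1/p - 1) = (1/2 : ℝ) ^ (1/p) / (1/2) := by
        rw [Real.rpow_sub (by norm_num : (0:ℝ) < 1/2), Real.rpow_one]
      rw [e1, e2, hC]
      field_simp
      ring
    have hlow := intervalIntegral.integral_mono_on zero_le_one
      (_root_.intervalIntegrable_const (c := f ((a + b) / 2)))
      ((hg_int.add hh_int).const_mul C) hmid
    rw [intervalIntegral.integral_const, intervalIntegral.integral_const_mul,
      integral_add hg_int hh_int, hg_eq, hh_eq] at hlow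
    simp only [smul_eq_mul, sub_zero, one_mul] at hlow
    -- hlow : f ((a+b)/2) ≤ C * (X + X)
    set u := (2:ℝ) ^ (1/p) with hu
    have hu0 : 0 < u := Real.rpow_pos_of_pos two_pos _
    have hhalf : (1/2 : ℝ) ^ (1/p) = u⁻¹ := by
      rw [hu, show (1/2 : ℝ) = 2⁻¹ by norm_num,
        Real.inv_rpow (by norm_num : (0:ℝ) ≤ 2)]
    rw [hC, hhalf] at hlow
    calc u * (p / (p + 1)) * f ((a + b) / 2)
        ≤ u * (p / (p + 1)) * (u⁻¹ * ((p + 1) / (2 * p)) * (X + X)) := by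
          apply mul_le_mul_of_nonneg_left hlow (by positivity)
      _ = X := by
          field_simp
          ring
  · -- upper bound
    have hub_g := upper_half p a b a b hp f hf hg_int ha hb
    have hub_h := upper_half p a b b a hp f hf hh_int hb ha
    rw [hg_eq] at hub_g
    rw [hh_eq] at hub_h
    have hsum : X + X ≤
        (((1/p) * f a + ((p-2)/p) * f b) / (1/p + 1)
          + (((p-1)/p) * (f a - f b)) / (1/p + 2) + ((1/p) * f b) / (1/p))
        + (((1/p) * f b + ((p-2)/p) * f a) / (1/p + 1)
          + (((p-1)/p) * (f b - f a)) / (1/p + 2) + ((1/p) * f a) / (1/p)) := by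
      exact add_le_add hub_g hub_h
    have hKeq : (((1/p) * f a + ((p-2)/p) * f b) / (1/p + 1)
          + (((p-1)/p) * (f a - f b)) / (1/p + 2) + ((1/p) * f b) / (1/p))
        + (((1/p) * f b + ((p-2)/p) * f a) / (1/p + 1)
          + (((p-1)/p) * (f b - f a)) / (1/p + 2) + ((1/p) * f a) / (1/p))
        = (p * (p + 2) / ((p + 1) * (2 * p + 1)) + ((p - 1) / p) * beta2 ((1 + p) / p) +
          (1 / p) * beta2 (1 / p)) * (f a + f b) := by
      have hp1 : p + 1 ≠ 0 := by positivity
      have hp2 : 2 * p + 1 ≠ 0 := by positivity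
      simp only [beta2]
      field_simp
      ring
    rw [hKeq] at hsum
    linarith
end

section
/- Let p be a real number with 1 < p < 2, let a < b be real numbers, and let f, g : [a, b] → [0, ∞) be Young-convex functions (with parameter p) on [a, b] whose product f·g is integrable on [a, b]. Then (1/(b−a)) ∫ₐᵇ f(x)g(x) dx ≤ [ 1/(p(2+p)) + (p−1)/(p(1+p)) + (p−1)²/(p(2+3p)) ] · f(a)g(a) + [ ((p−1)/p)²·B(2/p + 1, 3) + (2(p−1)/p²)·B(2/p, 3) + (1/p²)·B(2/p − 1, 3) ] · f(b)g(b) + [ (2(p−1)/p²)·B(2/p + 1, 2) + ((p−1)/p)²·B(2/p + 2, 2) + (1/p²)·B(2/p, 2) ] · ( f(a)g(b) + f(b)g(a) ), where B(x, 2) = 1/(x(x+1)) and B(x, 3) = 2/(x(x+1)(x+2)) denote values of the Euler Beta function (the condition p < 2 ensures 2/p − 1 > 0, so all Beta values are finite). -/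
open MeasureTheory intervalIntegral Set

set_option maxHeartbeats 1500000


/-- Euler Beta function value B(x, 3) = 2/(x(x+1)(x+2)). -/
noncomputable def beta3 (x : ℝ) : ℝ := 2 / (x * (x + 1) * (x + 2))

theorem young_convex_product_hadamard (p a b : ℝ) (hp1 : 1 < p) (hp2 : p < 2) (hab : a < b)
    (f g : ℝ → ℝ)
    (hf0 : ∀ x ∈ Set.Icc a b, 0 ≤ f x)
    (hg0 : ∀ x ∈ Set.Icc a b, 0 ≤ g x)
    (hf : ∀ x ∈ Set.Icc a b, ∀ y ∈ Set.Icc a b, ∀ t : ℝ, 0 < t → t ≤ 1 →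
      f (t * x + (1 - t) * y) ≤
        ((1 / p) * t ^ (1 / p) + ((p - 1) / p) * t ^ (1 + 1 / p)) * f x +
        (((p - 1) / p) * (1 - t) * t ^ (1 / p) + (1 / p) * t ^ (1 / p - 1) * (1 - t)) * f y)
    (hg : ∀ x ∈ Set.Icc a b, ∀ y ∈ Set.Icc a b, ∀ t : ℝ, 0 < t → t ≤ 1 →
      g (t * x + (1 - t) * y) ≤
        ((1 / p) * t ^ (1 / p) + ((p - 1) / p) * t ^ (1 + 1 / p)) * g x +
        (((p - 1) / p) * (1 - t) * t ^ (1 / p) + (1 / p) * t ^ (1 / p - 1) * (1 - t)) * g y)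
    (hint : IntervalIntegrable (fun x => f x * g x) MeasureTheory.volume a b) :
    (1 / (b - a)) * ∫ x in a..b, f x * g x ≤
      (1 / (p * (2 + p)) + (p - 1) / (p * (1 + p)) + (p - 1) ^ 2 / (p * (2 + 3 * p)))
        * (f a * g a) +
      (((p - 1) / p) ^ 2 * beta3 (2 / p + 1) + (2 * (p - 1) / p ^ 2) * beta3 (2 / p) +
        (1 / p ^ 2) * beta3 (2 / p - 1)) * (f b * g b) +
      ((2 * (p - 1) / p ^ 2) * beta2 (2 / p + 1) + ((p - 1) / p) ^ 2 * beta2 (2 / p + 2) +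
        (1 / p ^ 2) * beta2 (2 / p)) * (f a * g b + f b * g a) := by
  have hp0 : (0:ℝ) < p := by linarith
  have hpne : p ≠ 0 := ne_of_gt hp0
  have hab' : a - b ≠ 0 := by linarith
  have hq1 : (1:ℝ) < 2 / p := (one_lt_div hp0).mpr hp2
  set E : ℝ → ℝ := fun t =>
    ((f b * g b) * (1/p)^2) * t ^ (2/p - 2) +
    ((f b * g b) * (2*(1/p)*((p-1)/p) - 2*(1/p)^2) + (f a * g b + f b * g a) * (1/p)^2) * t ^ (2/p - 1) +
    ((f a * g a) * (1/p)^2 + (f b * g b) * (((p-1)/p)^2 - 4*(1/p)*((p-1)/p) + (1/p)^2) + (f a * g b + f b * g a) * (2*(1/p)*((p-1)/p) - (1/p)^2)) * t ^ (2/p) +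
    ((f a * g a) * (2*(1/p)*((p-1)/p)) + (f b * g b) * (2*(1/p)*((p-1)/p) - 2*((p-1)/p)^2) + (f a * g b + f b * g a) * (((p-1)/p)^2 - 2*(1/p)*((p-1)/p))) * t ^ (2/p + 1) +
    ((f a * g a) * ((p-1)/p)^2 + (f b * g b) * ((p-1)/p)^2 - (f a * g b + f b * g a) * ((p-1)/p)^2) * t ^ (2/p + 2) with hE
  -- Step 1: change of variables
  have step1 : ∫ t in (0:ℝ)..1, f ((a-b)*t + b) * g ((a-b)*t + b)
      = (1/(b-a)) * ∫ x in a..b, f x * g x := by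
    rw [intervalIntegral.integral_comp_mul_add (fun x => f x * g x) hab' b]
    rw [show (a-b)*0 + b = b by ring, show (a-b)*1 + b = a by ring,
      intervalIntegral.integral_symm b a, smul_eq_mul,
      show (a-b)⁻¹ = -((b-a)⁻¹) by rw [show a-b = -(b-a) by ring, inv_neg]]
    ring
  have hF : IntervalIntegrable (fun t => f ((a-b)*t + b) * g ((a-b)*t + b)) volume 0 1 := by
    have h2 := ((hint.comp_add_right b).comp_mul_left (c := a-b)).symm
    simpa [div_self hab', sub_self] using h2
  have he1 : (-1:ℝ) < 2/p - 2 := by linarith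
  have he2 : (-1:ℝ) < 2/p - 1 := by linarith
  have he3 : (-1:ℝ) < 2/p := by linarith
  have he4 : (-1:ℝ) < 2/p + 1 := by linarith
  have he5 : (-1:ℝ) < 2/p + 2 := by linarith
  have hmono : ∀ (C e : ℝ), -1 < e →
      IntervalIntegrable (fun t : ℝ => C * t ^ e) volume 0 1 :=
    fun C e he => (intervalIntegral.intervalIntegrable_rpow' he).const_mul C
  have hI1 := hmono ((f b * g b) * (1/p)^2) _ he1
  have hI2 := hmono ((f b * g b) * (2*(1/p)*((p-1)/p) - 2*(1/p)^2) + (f a * g b + f b * g a) * (1/p)^2) _ he2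
  have hI3 := hmono ((f a * g a) * (1/p)^2 + (f b * g b) * (((p-1)/p)^2 - 4*(1/p)*((p-1)/p) + (1/p)^2) + (f a * g b + f b * g a) * (2*(1/p)*((p-1)/p) - (1/p)^2)) _ he3
  have hI4 := hmono ((f a * g a) * (2*(1/p)*((p-1)/p)) + (f b * g b) * (2*(1/p)*((p-1)/p) - 2*((p-1)/p)^2) + (f a * g b + f b * g a) * (((p-1)/p)^2 - 2*(1/p)*((p-1)/p))) _ he4
  have hI5 := hmono ((f a * g a) * ((p-1)/p)^2 + (f b * g b) * ((p-1)/p)^2 - (f a * g b + f b * g a) * ((p-1)/p)^2) _ he5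
  have hEint : IntervalIntegrable E volume 0 1 := ((((hI1.add hI2).add hI3).add hI4).add hI5)
  -- pointwise bound on (0,1]
  have hpt : ∀ t : ℝ, 0 < t → t ≤ 1 →
      f ((a-b)*t + b) * g ((a-b)*t + b) ≤ E t := by
    intro t ht0 ht1
    have hx0 : (a-b)*t + b ∈ Set.Icc a b := by
      constructor <;> nlinarith
    have ha' : a ∈ Set.Icc a b := ⟨le_refl a, le_of_lt hab⟩
    have hb' : b ∈ Set.Icc a b := ⟨le_of_lt hab, le_refl b⟩
    have hxf := hf a ha' b hb' t ht0 ht1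
    have hxg := hg a ha' b hb' t ht0 ht1
    rw [show t * a + (1 - t) * b = (a-b)*t + b by ring] at hxf hxg
    have hfx0 := hf0 _ hx0
    have hgx0 := hg0 _ hx0
    calc f ((a-b)*t + b) * g ((a-b)*t + b)
        ≤ (((1 / p) * t ^ (1 / p) + ((p - 1) / p) * t ^ (1 + 1 / p)) * f a +
            (((p - 1) / p) * (1 - t) * t ^ (1 / p) + (1 / p) * t ^ (1 / p - 1) * (1 - t)) * f b) *
          (((1 / p) * t ^ (1 / p) + ((p - 1) / p) * t ^ (1 + 1 / p)) * g a +
            (((p - 1) / p) * (1 - t) * t ^ (1 / p) + (1 / p) * t ^ (1 / p - 1) * (1 - t)) * g b) := by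
          exact mul_le_mul hxf hxg hgx0 (le_trans hfx0 hxf)
      _ = E t := by
          have hmul : ∀ e1 e2 : ℝ, t ^ (e1 + e2) = t ^ e1 * t ^ e2 := fun e1 e2 =>
            Real.rpow_add ht0 e1 e2
          have hone : t ^ (1:ℝ) = t := Real.rpow_one t
          have hneg : t ^ (-1:ℝ) = t⁻¹ := Real.rpow_neg_one t
          have e0 : t ^ (2/p) = t ^ (1/p) * t ^ (1/p) := by
            rw [show (2/p : ℝ) = 1/p + 1/p by ring, hmul]
          have ea : t ^ (1 + 1/p) = t * t ^ (1/p) := by rw [hmul, hone]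
          have eb : t ^ (1/p - 1) = t ^ (1/p) * t⁻¹ := by
            rw [show (1/p - 1 : ℝ) = 1/p + (-1) by ring, hmul, hneg]
          have e1 : t ^ (2/p - 2) = t ^ (1/p) * t ^ (1/p) * t⁻¹ * t⁻¹ := by
            rw [show (2/p - 2 : ℝ) = (1/p + 1/p) + -1 + -1 by ring, hmul, hmul, hmul, hneg]
          have e2 : t ^ (2/p - 1) = t ^ (1/p) * t ^ (1/p) * t⁻¹ := by
            rw [show (2/p - 1 : ℝ) = (1/p + 1/p) + -1 by ring, hmul, hmul, hneg]
          have e4 : t ^ (2/p + 1) = t ^ (1/p) * t ^ (1/p) * t := by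
            rw [show (2/p + 1 : ℝ) = (1/p + 1/p) + 1 by ring, hmul, hmul, hone]
          have e5 : t ^ (2/p + 2) = t ^ (1/p) * t ^ (1/p) * t * t := by
            rw [show (2/p + 2 : ℝ) = ((1/p + 1/p) + 1) + 1 by ring, hmul, hmul, hmul, hone]
          rw [hE]
          simp only [ea, eb, e0, e1, e2, e4, e5]
          field_simp
          ring
  -- monotonicity of the integral (a.e. on [0,1])
  have step2 : ∫ t in (0:ℝ)..1, f ((a-b)*t + b) * g ((a-b)*t + b) ≤ ∫ t in (0:ℝ)..1, E t := by
    apply intervalIntegral.integral_mono_ae_restrict zero_le_one hF hEint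
    have hzero : ∀ᵐ t : ℝ ∂(volume.restrict (Set.Icc (0:ℝ) 1)), t ≠ 0 := by
      apply MeasureTheory.ae_restrict_of_ae
      rw [MeasureTheory.ae_iff]
      simpa using MeasureTheory.measure_singleton (0:ℝ)
    have hmem := MeasureTheory.ae_restrict_mem (μ := volume) (measurableSet_Icc (a := (0:ℝ)) (b := 1))
    filter_upwards [hzero, hmem] with t ht0 htm
    exact hpt t (lt_of_le_of_ne htm.1 (Ne.symm ht0)) htm.2
  have key : ∀ (C e d : ℝ), -1 < e → e + 1 = d → ∫ t in (0:ℝ)..1, C * t ^ e = C / d := by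
    intro C e d he hd
    rw [intervalIntegral.integral_const_mul, integral_rpow (Or.inl he), Real.one_rpow,
      Real.zero_rpow (by linarith), sub_zero, hd]
    ring
  have hEval : ∫ t in (0:ℝ)..1, E t =
      ((f b * g b) * (1/p)^2) / (2/p - 1) +
      ((f b * g b) * (2*(1/p)*((p-1)/p) - 2*(1/p)^2) + (f a * g b + f b * g a) * (1/p)^2) / (2/p) +
      ((f a * g a) * (1/p)^2 + (f b * g b) * (((p-1)/p)^2 - 4*(1/p)*((p-1)/p) + (1/p)^2) + (f a * g b + f b * g a) * (2*(1/p)*((p-1)/p) - (1/p)^2)) / (2/p + 1) +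
      ((f a * g a) * (2*(1/p)*((p-1)/p)) + (f b * g b) * (2*(1/p)*((p-1)/p) - 2*((p-1)/p)^2) + (f a * g b + f b * g a) * (((p-1)/p)^2 - 2*(1/p)*((p-1)/p))) / (2/p + 2) +
      ((f a * g a) * ((p-1)/p)^2 + (f b * g b) * ((p-1)/p)^2 - (f a * g b + f b * g a) * ((p-1)/p)^2) / (2/p + 3) := by
    rw [hE]
    rw [intervalIntegral.integral_add (((hI1.add hI2).add hI3).add hI4) hI5,
      intervalIntegral.integral_add ((hI1.add hI2).add hI3) hI4,
      intervalIntegral.integral_add (hI1.add hI2) hI3,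
      intervalIntegral.integral_add hI1 hI2,
      key _ _ (2/p - 1) he1 (by ring), key _ _ (2/p) he2 (by ring),
      key _ _ (2/p + 1) he3 (by ring),
      key _ _ (2/p + 2) he4 (by ring), key _ _ (2/p + 3) he5 (by ring)]
  -- nonzero denominators
  have hd1 : (2/p - 1 : ℝ) ≠ 0 := ne_of_gt (by linarith)
  have hd9 : (2 - p : ℝ) ≠ 0 := ne_of_gt (by linarith)
  have hd10 : (p^2*2 - p^3 : ℝ) ≠ 0 := ne_of_gt (by nlinarith [mul_pos (mul_pos hp0 hp0) (show (0:ℝ) < 2 - p by linarith)])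
  have hd11 : (2*p^2 - p^3 : ℝ) ≠ 0 := ne_of_gt (by nlinarith [mul_pos (mul_pos hp0 hp0) (show (0:ℝ) < 2 - p by linarith)])
  have hp2' : (0:ℝ) < 2 - p := by linarith
  have hd13 : (p^2*8 - p^4*2 : ℝ) ≠ 0 :=
    ne_of_gt (by nlinarith [mul_pos (mul_pos (mul_pos hp0 hp0) hp2') (show (0:ℝ) < 2 + p by linarith)])
  have hd2 : (2/p : ℝ) ≠ 0 := by positivity
  have hd3 : (2/p + 1 : ℝ) ≠ 0 := by positivity
  have hd4 : (2/p + 2 : ℝ) ≠ 0 := by positivity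
  have hd5 : (2/p + 3 : ℝ) ≠ 0 := by positivity
  have hd6 : (2 + p : ℝ) ≠ 0 := by positivity
  have hd7 : (1 + p : ℝ) ≠ 0 := by positivity
  have hd8 : (2 + 3*p : ℝ) ≠ 0 := by positivity
  -- three scalar coefficient identities
  have hcP : (1/p)^2 / (2/p + 1) + (2*(1/p)*((p-1)/p)) / (2/p + 2) + ((p-1)/p)^2 / (2/p + 3)
      = 1 / (p * (2 + p)) + (p - 1) / (p * (1 + p)) + (p - 1) ^ 2 / (p * (2 + 3 * p)) := by
    field_simp
  have hcQ : (1/p)^2 / (2/p - 1) + (2*(1/p)*((p-1)/p) - 2*(1/p)^2) / (2/p) +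
      (((p-1)/p)^2 - 4*(1/p)*((p-1)/p) + (1/p)^2) / (2/p + 1) +
      (2*(1/p)*((p-1)/p) - 2*((p-1)/p)^2) / (2/p + 2) + ((p-1)/p)^2 / (2/p + 3)
      = ((p - 1) / p) ^ 2 * beta3 (2 / p + 1) + (2 * (p - 1) / p ^ 2) * beta3 (2 / p) +
        (1 / p ^ 2) * beta3 (2 / p - 1) := by
    simp only [beta3]
    field_simp
    ring
  have hcR : (1/p)^2 / (2/p) + (2*(1/p)*((p-1)/p) - (1/p)^2) / (2/p + 1) +
      (((p-1)/p)^2 - 2*(1/p)*((p-1)/p)) / (2/p + 2) + (-((p-1)/p)^2) / (2/p + 3)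
      = (2 * (p - 1) / p ^ 2) * beta2 (2 / p + 1) + ((p - 1) / p) ^ 2 * beta2 (2 / p + 2) +
        (1 / p ^ 2) * beta2 (2 / p) := by
    simp only [beta2]
    field_simp
    ring
  calc (1 / (b - a)) * ∫ x in a..b, f x * g x
      = ∫ t in (0:ℝ)..1, f ((a-b)*t + b) * g ((a-b)*t + b) := step1.symm
    _ ≤ ∫ t in (0:ℝ)..1, E t := step2
    _ = _ := by
        rw [hEval, ← hcP, ← hcQ, ← hcR]
        field_simp
        ring
end

section
/- Let a < b be real numbers and let f : [a, b] → [0, ∞) be a Nesbitt-convex function on [a, b] that is integrable on [a, b]. Then f((a+b)/2) ≤ (1/(b−a)) ∫ₐᵇ f(x) dx ≤ ((3 ln 3 − 2)/2) · (f(a) + f(b)). (The constant (3 ln 3 − 2)/2 equals ln(3√3/e).) -/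
open MeasureTheory Set intervalIntegral

theorem nesbitt_convex_hadamard (a b : ℝ) (hab : a < b)
    (f : ℝ → ℝ)
    (hf0 : ∀ x ∈ Set.Icc a b, 0 ≤ f x)
    (hf : ∀ x ∈ Set.Icc a b, ∀ y ∈ Set.Icc a b, ∀ t : ℝ, 0 < t → t ≤ 1 →
      f (t * x + (1 - t) * y) ≤
        (2 * t ^ 2 / (3 - 2 * t) + 2 * t * (1 - t) / (1 + 2 * t)) * f x +
        (2 * t * (1 - t) / (3 - 2 * t) + 2 * (1 - t) ^ 2 / (1 + 2 * t)) * f y)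
    (hint : IntervalIntegrable f MeasureTheory.volume a b) :
    f ((a + b) / 2) ≤ (1 / (b - a)) * ∫ x in a..b, f x ∧
    (1 / (b - a)) * ∫ x in a..b, f x ≤ ((3 * Real.log 3 - 2) / 2) * (f a + f b) := by
  have hba : (0:ℝ) < b - a := sub_pos.2 hab
  have hbane : b - a ≠ 0 := ne_of_gt hba
  have hIicc : Set.uIcc (0:ℝ) 1 = Set.Icc 0 1 := uIcc_of_le (by norm_num)
  constructor
  · -- left inequality
    have hint2 : IntervalIntegrable (fun x => f (a + b - x)) volume a b := by
      simpa using (hint.comp_sub_left (a + b)).symm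
    have key : ∀ x ∈ Set.Icc a b, f ((a + b) / 2) ≤ (f x + f (a + b - x)) / 2 := by
      intro x hx
      have hx' : a + b - x ∈ Set.Icc a b := ⟨by linarith [hx.2], by linarith [hx.1]⟩
      have h := hf x hx (a + b - x) hx' (1/2) (by norm_num) (by norm_num)
      have e1 : (1/2 : ℝ) * x + (1 - 1/2) * (a + b - x) = (a + b) / 2 := by ring
      rw [e1] at h
      norm_num at h
      linarith
    have hmono := intervalIntegral.integral_mono_on hab.le
      (_root_.intervalIntegrable_const (c := f ((a + b) / 2)))
      ((hint.add hint2).div_const 2) key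
    have hrefl : (∫ x in a..b, f (a + b - x)) = ∫ x in a..b, f x := by
      simpa using intervalIntegral.integral_comp_sub_left f (a + b)
    rw [intervalIntegral.integral_const, intervalIntegral.integral_div,
      intervalIntegral.integral_add hint hint2, hrefl, smul_eq_mul] at hmono
    rw [one_div, ← div_eq_inv_mul, le_div_iff₀ hba]
    linarith
  · -- right inequality
    have hsub : (∫ t in (0:ℝ)..1, f ((b - a) * t + a)) = (b - a)⁻¹ * ∫ x in a..b, f x := by
      rw [intervalIntegral.integral_comp_mul_add f hbane a]
      simp [sub_add_cancel]
    have hint1 : IntervalIntegrable (fun t => f ((b - a) * t + a)) volume 0 1 := by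
      have h2 := (hint.comp_add_right a).comp_mul_left (c := b - a)
      simpa [sub_self, div_self hbane] using h2
    have h3 : ∀ t ∈ Set.Icc (0:ℝ) 1, (3:ℝ) - 2 * t ≠ 0 := by
      intro t ht; have := ht.2; intro hc; linarith
    have h4 : ∀ t ∈ Set.Icc (0:ℝ) 1, (1:ℝ) + 2 * t ≠ 0 := by
      intro t ht; have := ht.1; intro hc; linarith
    have hφ : IntervalIntegrable (fun t : ℝ =>
        (2 * t ^ 2 / (3 - 2 * t) + 2 * t * (1 - t) / (1 + 2 * t)) * f b +
        (2 * t * (1 - t) / (3 - 2 * t) + 2 * (1 - t) ^ 2 / (1 + 2 * t)) * f a)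
        volume 0 1 := by
      apply ContinuousOn.intervalIntegrable
      rw [hIicc]
      apply ContinuousOn.add
      · exact (((by fun_prop : Continuous fun t : ℝ => 2 * t ^ 2).continuousOn.div
          (by fun_prop : Continuous fun t : ℝ => 3 - 2 * t).continuousOn h3).add
          (((by fun_prop : Continuous fun t : ℝ => 2 * t * (1 - t)).continuousOn.div
          (by fun_prop : Continuous fun t : ℝ => 1 + 2 * t).continuousOn h4))).mul
          continuousOn_const
      · exact (((by fun_prop : Continuous fun t : ℝ => 2 * t * (1 - t)).continuousOn.div
          (by fun_prop : Continuous fun t : ℝ => 3 - 2 * t).continuousOn h3).add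
          (((by fun_prop : Continuous fun t : ℝ => 2 * (1 - t) ^ 2).continuousOn.div
          (by fun_prop : Continuous fun t : ℝ => 1 + 2 * t).continuousOn h4))).mul
          continuousOn_const
    have hle : ∀ t ∈ Set.Icc (0:ℝ) 1, f ((b - a) * t + a) ≤
        (2 * t ^ 2 / (3 - 2 * t) + 2 * t * (1 - t) / (1 + 2 * t)) * f b +
        (2 * t * (1 - t) / (3 - 2 * t) + 2 * (1 - t) ^ 2 / (1 + 2 * t)) * f a := by
      intro t ht
      have hamem : a ∈ Set.Icc a b := ⟨le_rfl, hab.le⟩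
      have hbmem : b ∈ Set.Icc a b := ⟨hab.le, le_rfl⟩
      rcases eq_or_lt_of_le ht.1 with h0 | h0
      · rw [← h0]
        norm_num
        linarith [hf0 a hamem]
      · have h := hf b hbmem a hamem t h0 ht.2
        have e : t * b + (1 - t) * a = (b - a) * t + a := by ring
        rw [e] at h
        exact h
    have hmono2 := intervalIntegral.integral_mono_on (by norm_num : (0:ℝ) ≤ 1) hint1 hφ hle
    have hval : (∫ t in (0:ℝ)..1,
        ((2 * t ^ 2 / (3 - 2 * t) + 2 * t * (1 - t) / (1 + 2 * t)) * f b +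
        (2 * t * (1 - t) / (3 - 2 * t) + 2 * (1 - t) ^ 2 / (1 + 2 * t)) * f a))
        = (3 * Real.log 3 - 2) / 2 * (f a + f b) := by
      have hder : ∀ t ∈ Set.uIcc (0:ℝ) 1,
          HasDerivAt (fun t : ℝ =>
            f b * (-t ^ 2 - 9/4 * Real.log (3 - 2 * t) - 3/4 * Real.log (1 + 2 * t)) +
            f a * (t ^ 2 - 2 * t + 3/4 * Real.log (3 - 2 * t) + 9/4 * Real.log (1 + 2 * t)))
            ((2 * t ^ 2 / (3 - 2 * t) + 2 * t * (1 - t) / (1 + 2 * t)) * f b +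
            (2 * t * (1 - t) / (3 - 2 * t) + 2 * (1 - t) ^ 2 / (1 + 2 * t)) * f a) t := by
        intro t ht
        rw [hIicc] at ht
        have h3' := h3 t ht
        have h4' := h4 t ht
        have d1 : HasDerivAt (fun t : ℝ => 3 - 2 * t) (-2) t := by
          exact (((hasDerivAt_id t).const_mul 2).const_sub 3).congr_deriv (by simp)
        have d2 : HasDerivAt (fun t : ℝ => 1 + 2 * t) 2 t := by
          exact (((hasDerivAt_id t).const_mul 2).const_add 1).congr_deriv (by simp)
        have l1 := d1.log h3'
        have l2 := d2.log h4'
        have dt2 : HasDerivAt (fun t : ℝ => t ^ 2) (2 * t) t := by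
          simpa using hasDerivAt_pow 2 t
        have dlin : HasDerivAt (fun t : ℝ => 2 * t) 2 t := by
          simpa using (hasDerivAt_id t).const_mul 2
        have D := (((dt2.neg.sub (l1.const_mul (9/4))).sub (l2.const_mul (3/4))).const_mul
            (f b)).add
          ((((dt2.sub dlin).add (l1.const_mul (3/4))).add (l2.const_mul (9/4))).const_mul (f a))
        refine D.congr_deriv ?_
        field_simp
        ring
      rw [intervalIntegral.integral_eq_sub_of_hasDerivAt hder hφ]
      norm_num [Real.log_one]
      ring
    calc (1 / (b - a)) * ∫ x in a..b, f x
        = ∫ t in (0:ℝ)..1, f ((b - a) * t + a) := by rw [hsub, one_div]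
      _ ≤ _ := le_of_le_of_eq hmono2 hval
end

section
/- Let a < b be real numbers and let f, g : [a, b] → [0, ∞) be Nesbitt-convex functions on [a, b] whose product f·g is integrable on [a, b]. Then (1/(b−a)) ∫ₐᵇ f(x)g(x) dx ≤ (125/6 − (147/8) ln 3) · ( f(a)g(a) + f(b)g(b) ) + ((117/8) ln 3 − 95/6) · ( f(a)g(b) + f(b)g(a) ). -/
noncomputable def NA (t : ℝ) : ℝ := 2 * t ^ 2 / (3 - 2 * t) + 2 * t * (1 - t) / (1 + 2 * t)

noncomputable def NB (t : ℝ) : ℝ :=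
  2 * t * (1 - t) / (3 - 2 * t) + 2 * (1 - t) ^ 2 / (1 + 2 * t)

lemma NB_eq (t : ℝ) : NB t = NA (1 - t) := by
  simp only [NA, NB]
  ring

lemma NA_nonneg {t : ℝ} (h0 : 0 ≤ t) (h1 : t ≤ 1) : 0 ≤ NA t := by
  unfold NA
  apply add_nonneg <;> apply div_nonneg <;> nlinarith

lemma NB_nonneg {t : ℝ} (h0 : 0 ≤ t) (h1 : t ≤ 1) : 0 ≤ NB t := by
  rw [NB_eq]; exact NA_nonneg (by linarith) (by linarith)

lemma NA_contOn : ContinuousOn NA (Set.Icc 0 1) := by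
  unfold NA
  apply ContinuousOn.add <;>
    exact ContinuousOn.div (by fun_prop) (by fun_prop)
      (fun t ht => by have := ht.1; have := ht.2; intro h; nlinarith)

lemma NB_contOn : ContinuousOn NB (Set.Icc 0 1) := by
  unfold NB
  apply ContinuousOn.add <;>
    exact ContinuousOn.div (by fun_prop) (by fun_prop)
      (fun t ht => by have := ht.1; have := ht.2; intro h; nlinarith)

lemma nesbitt_aux_deriv (c1 c2 c3 c4 c5 c6 c7 t : ℝ)
    (h1 : (3 : ℝ) - 2 * t ≠ 0) (h2 : (1 : ℝ) + 2 * t ≠ 0) :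
    HasDerivAt (fun s : ℝ => c1 / (3 - 2 * s) + c2 / (1 + 2 * s) +
        c3 * Real.log (3 - 2 * s) + c4 * Real.log (1 + 2 * s) +
        c5 * s ^ 3 + c6 * s ^ 2 + c7 * s)
      (2 * c1 / (3 - 2 * t) ^ 2 - 2 * c2 / (1 + 2 * t) ^ 2 - 2 * c3 / (3 - 2 * t)
        + 2 * c4 / (1 + 2 * t) + 3 * c5 * t ^ 2 + 2 * c6 * t + c7) t := by
  have hu : HasDerivAt (fun s : ℝ => 3 - 2 * s) (-2) t := by
    simpa using ((hasDerivAt_id' t).const_mul (2 : ℝ)).const_sub (3 : ℝ)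
  have hv : HasDerivAt (fun s : ℝ => 1 + 2 * s) 2 t := by
    simpa using ((hasDerivAt_id' t).const_mul (2 : ℝ)).const_add (1 : ℝ)
  have d1 := (hasDerivAt_const t c1).div hu h1
  have d2 := (hasDerivAt_const t c2).div hv h2
  have d3 := (hu.log h1).const_mul c3
  have d4 := (hv.log h2).const_mul c4
  have d5 := (hasDerivAt_pow 3 t).const_mul c5
  have d6 := (hasDerivAt_pow 2 t).const_mul c6
  have d7 := (hasDerivAt_id t).const_mul c7
  have := ((((((d1.add d2).add d3).add d4).add d5).add d6).add d7)
  apply this.congr_deriv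
  field_simp
  ring

lemma nesbitt_intA2 : ∫ t in (0 : ℝ)..1, (NA t) ^ 2 = 125 / 6 - 147 / 8 * Real.log 3 := by
  have key : ∀ t ∈ Set.uIcc (0 : ℝ) 1,
      HasDerivAt (fun s : ℝ => (81 / 8) / (3 - 2 * s) + (-9 / 8) / (1 + 2 * s) +
        (243 / 16) * Real.log (3 - 2 * s) + (-51 / 16) * Real.log (1 + 2 * s) +
        (4 / 3) * s ^ 3 + 0 * s ^ 2 + 12 * s) ((NA t) ^ 2) t := by
    intro t ht
    rw [Set.uIcc_of_le (by norm_num)] at ht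
    obtain ⟨h0, h1⟩ := ht
    have hu : (3 : ℝ) - 2 * t ≠ 0 := by intro h; nlinarith
    have hv : (1 : ℝ) + 2 * t ≠ 0 := by intro h; nlinarith
    have := nesbitt_aux_deriv (81 / 8) (-9 / 8) (243 / 16) (-51 / 16) (4 / 3) 0 12 t hu hv
    convert this using 1
    unfold NA
    field_simp
    ring
  have hint : IntervalIntegrable (fun t => (NA t) ^ 2) MeasureTheory.volume 0 1 := by
    apply ContinuousOn.intervalIntegrable
    rw [Set.uIcc_of_le (by norm_num : (0:ℝ) ≤ 1)]
    exact NA_contOn.pow 2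
  rw [intervalIntegral.integral_eq_sub_of_hasDerivAt key hint]
  norm_num
  ring

lemma nesbitt_intB2 : ∫ t in (0 : ℝ)..1, (NB t) ^ 2 = 125 / 6 - 147 / 8 * Real.log 3 := by
  have h : ∀ t : ℝ, (NB t) ^ 2 = (fun s => (NA s) ^ 2) (1 - t) := fun t => by
    simp only [NB_eq]
  simp_rw [h]
  rw [intervalIntegral.integral_comp_sub_left (fun s => (NA s) ^ 2) 1]
  norm_num [nesbitt_intA2]

lemma nesbitt_intAB : ∫ t in (0 : ℝ)..1, NA t * NB t = 117 / 8 * Real.log 3 - 95 / 6 := by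
  have key : ∀ t ∈ Set.uIcc (0 : ℝ) 1,
      HasDerivAt (fun s : ℝ => (-27 / 8) / (3 - 2 * s) + (27 / 8) / (1 + 2 * s) +
        (-117 / 16) * Real.log (3 - 2 * s) + (117 / 16) * Real.log (1 + 2 * s) +
        (-4 / 3) * s ^ 3 + 2 * s ^ 2 + (-12) * s) (NA t * NB t) t := by
    intro t ht
    rw [Set.uIcc_of_le (by norm_num)] at ht
    obtain ⟨h0, h1⟩ := ht
    have hu : (3 : ℝ) - 2 * t ≠ 0 := by intro h; nlinarith
    have hv : (1 : ℝ) + 2 * t ≠ 0 := by intro h; nlinarith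
    have := nesbitt_aux_deriv (-27 / 8) (27 / 8) (-117 / 16) (117 / 16) (-4 / 3) 2 (-12) t hu hv
    convert this using 1
    unfold NA NB
    field_simp
    ring
  have hint : IntervalIntegrable (fun t => NA t * NB t) MeasureTheory.volume 0 1 := by
    apply ContinuousOn.intervalIntegrable
    rw [Set.uIcc_of_le (by norm_num : (0:ℝ) ≤ 1)]
    exact NA_contOn.mul NB_contOn
  rw [intervalIntegral.integral_eq_sub_of_hasDerivAt key hint]
  norm_num
  ring

theorem nesbitt_convex_product_hadamard (a b : ℝ) (hab : a < b)
    (f g : ℝ → ℝ)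
    (hf0 : ∀ x ∈ Set.Icc a b, 0 ≤ f x)
    (hg0 : ∀ x ∈ Set.Icc a b, 0 ≤ g x)
    (hf : ∀ x ∈ Set.Icc a b, ∀ y ∈ Set.Icc a b, ∀ t : ℝ, 0 < t → t ≤ 1 →
      f (t * x + (1 - t) * y) ≤
        (2 * t ^ 2 / (3 - 2 * t) + 2 * t * (1 - t) / (1 + 2 * t)) * f x +
        (2 * t * (1 - t) / (3 - 2 * t) + 2 * (1 - t) ^ 2 / (1 + 2 * t)) * f y)
    (hg : ∀ x ∈ Set.Icc a b, ∀ y ∈ Set.Icc a b, ∀ t : ℝ, 0 < t → t ≤ 1 →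
      g (t * x + (1 - t) * y) ≤
        (2 * t ^ 2 / (3 - 2 * t) + 2 * t * (1 - t) / (1 + 2 * t)) * g x +
        (2 * t * (1 - t) / (3 - 2 * t) + 2 * (1 - t) ^ 2 / (1 + 2 * t)) * g y)
    (hint : IntervalIntegrable (fun x => f x * g x) MeasureTheory.volume a b) :
    (1 / (b - a)) * ∫ x in a..b, f x * g x ≤
      (125 / 6 - (147 / 8) * Real.log 3) * (f a * g a + f b * g b) +
      ((117 / 8) * Real.log 3 - 95 / 6) * (f a * g b + f b * g a) := by
  have hba : (0 : ℝ) < b - a := by linarith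
  have hbane : b - a ≠ 0 := hba.ne'
  have hamem : a ∈ Set.Icc a b := ⟨le_rfl, hab.le⟩
  have hbmem : b ∈ Set.Icc a b := ⟨hab.le, le_rfl⟩
  set H : ℝ → ℝ := fun t => NA t ^ 2 * (f a * g a) + NB t ^ 2 * (f b * g b) +
    NA t * NB t * (f a * g b + f b * g a) with hH
  -- pointwise bound
  have hpt : ∀ x ∈ Set.Icc a b, f x * g x ≤ H ((b - x) / (b - a)) := by
    intro x hx
    set t := (b - x) / (b - a) with ht
    have ht0 : 0 ≤ t := div_nonneg (by linarith [hx.2]) hba.le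
    have ht1 : t ≤ 1 := by rw [div_le_one hba]; linarith [hx.1]
    have hxt : t * a + (1 - t) * b = x := by
      rw [ht]; field_simp; ring
    rcases eq_or_lt_of_le ht0 with h0 | h0
    · -- t = 0, so x = b
      have hxb : x = b := by rw [← hxt, ← h0]; ring
      rw [hxb, ← h0]
      have hNA0 : NA 0 = 0 := by unfold NA; norm_num
      have hNB0 : NB 0 = 2 := by unfold NB; norm_num
      simp only [hH, hNA0, hNB0]
      nlinarith [mul_nonneg (hf0 b hbmem) (hg0 b hbmem)]
    · have hfx := hf a hamem b hbmem t h0 ht1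
      have hgx := hg a hamem b hbmem t h0 ht1
      rw [hxt] at hfx hgx
      have hfx' : f x ≤ NA t * f a + NB t * f b := by
        simp only [NA, NB]; exact hfx
      have hgx' : g x ≤ NA t * g a + NB t * g b := by
        simp only [NA, NB]; exact hgx
      have hNAt := NA_nonneg ht0 ht1
      have hNBt := NB_nonneg ht0 ht1
      have hfb : 0 ≤ NA t * f a + NB t * f b :=
        add_nonneg (mul_nonneg hNAt (hf0 a hamem)) (mul_nonneg hNBt (hf0 b hbmem))
      calc f x * g x ≤ (NA t * f a + NB t * f b) * (NA t * g a + NB t * g b) :=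
            mul_le_mul hfx' hgx' (hg0 x hx) hfb
        _ = H t := by simp only [hH]; ring
  -- integrability of the majorant
  have hmapsTo : Set.MapsTo (fun x => (b - x) / (b - a)) (Set.Icc a b) (Set.Icc (0:ℝ) 1) := by
    intro x hx
    exact ⟨div_nonneg (by linarith [hx.2]) hba.le, by rw [div_le_one hba]; linarith [hx.1]⟩
  have hHc : ContinuousOn H (Set.Icc (0:ℝ) 1) :=
    (((NA_contOn.pow 2).mul continuousOn_const).add
      ((NB_contOn.pow 2).mul continuousOn_const)).add
      ((NA_contOn.mul NB_contOn).mul continuousOn_const)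
  have hτc : ContinuousOn (fun x : ℝ => (b - x) / (b - a)) (Set.Icc a b) :=
    ((continuous_const.sub continuous_id).div_const _).continuousOn
  have hcomp : ContinuousOn (fun x => H ((b - x) / (b - a))) (Set.Icc a b) :=
    hHc.comp hτc hmapsTo
  have hHint : IntervalIntegrable (fun x => H ((b - x) / (b - a)))
      MeasureTheory.volume a b := by
    apply ContinuousOn.intervalIntegrable
    rwa [Set.uIcc_of_le hab.le]
  -- monotonicity
  have hmono : (∫ x in a..b, f x * g x) ≤ ∫ x in a..b, H ((b - x) / (b - a)) :=
    intervalIntegral.integral_mono_on hab.le hint hHint hpt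
  -- substitution
  have hc : -(b - a)⁻¹ ≠ 0 := neg_ne_zero.mpr (inv_ne_zero hbane)
  have hrw : (fun x : ℝ => H ((b - x) / (b - a))) =
      fun x : ℝ => H (-(b - a)⁻¹ * x + b / (b - a)) := by
    funext x; congr 1; field_simp; ring
  have hsub : (∫ x in a..b, H ((b - x) / (b - a))) = (b - a) * ∫ t in (0:ℝ)..1, H t := by
    rw [hrw, intervalIntegral.integral_comp_mul_add H hc (b / (b - a))]
    have e1 : -(b - a)⁻¹ * a + b / (b - a) = 1 := by field_simp; ring
    have e2 : -(b - a)⁻¹ * b + b / (b - a) = 0 := by field_simp; ring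
    rw [e1, e2, intervalIntegral.integral_symm]
    rw [smul_eq_mul]
    field_simp
  -- value of the model integral
  have hiA : IntervalIntegrable (fun t => NA t ^ 2 * (f a * g a)) MeasureTheory.volume 0 1 := by
    apply ContinuousOn.intervalIntegrable
    rw [Set.uIcc_of_le (by norm_num : (0:ℝ) ≤ 1)]
    exact (NA_contOn.pow 2).mul continuousOn_const
  have hiB : IntervalIntegrable (fun t => NB t ^ 2 * (f b * g b)) MeasureTheory.volume 0 1 := by
    apply ContinuousOn.intervalIntegrable
    rw [Set.uIcc_of_le (by norm_num : (0:ℝ) ≤ 1)]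
    exact (NB_contOn.pow 2).mul continuousOn_const
  have hiC : IntervalIntegrable (fun t => NA t * NB t * (f a * g b + f b * g a))
      MeasureTheory.volume 0 1 := by
    apply ContinuousOn.intervalIntegrable
    rw [Set.uIcc_of_le (by norm_num : (0:ℝ) ≤ 1)]
    exact (NA_contOn.mul NB_contOn).mul continuousOn_const
  have hval : (∫ t in (0:ℝ)..1, H t) =
      (125 / 6 - 147 / 8 * Real.log 3) * (f a * g a) +
      (125 / 6 - 147 / 8 * Real.log 3) * (f b * g b) +
      (117 / 8 * Real.log 3 - 95 / 6) * (f a * g b + f b * g a) := by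
    simp only [hH]
    rw [intervalIntegral.integral_add (hiA.add hiB) hiC,
      intervalIntegral.integral_add hiA hiB,
      intervalIntegral.integral_mul_const, intervalIntegral.integral_mul_const,
      intervalIntegral.integral_mul_const, nesbitt_intA2, nesbitt_intB2, nesbitt_intAB]
  -- combine
  have hchain : (∫ x in a..b, f x * g x) ≤ (b - a) *
      ((125 / 6 - 147 / 8 * Real.log 3) * (f a * g a) +
       (125 / 6 - 147 / 8 * Real.log 3) * (f b * g b) +
       (117 / 8 * Real.log 3 - 95 / 6) * (f a * g b + f b * g a)) := by
    rw [← hval, ← hsub]; exact hmono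
  have h1 : (0:ℝ) ≤ 1 / (b - a) := by positivity
  calc (1 / (b - a)) * ∫ x in a..b, f x * g x
      ≤ (1 / (b - a)) * ((b - a) *
        ((125 / 6 - 147 / 8 * Real.log 3) * (f a * g a) +
         (125 / 6 - 147 / 8 * Real.log 3) * (f b * g b) +
         (117 / 8 * Real.log 3 - 95 / 6) * (f a * g b + f b * g a))) :=
        mul_le_mul_of_nonneg_left hchain h1
    _ = (125 / 6 - (147 / 8) * Real.log 3) * (f a * g a + f b * g b) +
        ((117 / 8) * Real.log 3 - 95 / 6) * (f a * g b + f b * g a) := by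
        rw [one_div, inv_mul_cancel_left₀ hbane]; ring
end

section
/- Let a < b be real numbers and let f, g : [a, b] → [0, ∞) be Nesbitt-convex functions on [a, b] whose product f·g is integrable on [a, b], and suppose f and g are similarly ordered at the endpoints, i.e. f(a)g(b) + f(b)g(a) ≤ f(a)g(a) + f(b)g(b). Then (1/(b−a)) ∫ₐᵇ f(x)g(x) dx ≤ (5 − (15/4) ln 3) · ( f(a)g(a) + f(b)g(b) ). -/
noncomputable def nA (t : ℝ) : ℝ := 2 * t ^ 2 / (3 - 2 * t) + 2 * t * (1 - t) / (1 + 2 * t)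
noncomputable def nB (t : ℝ) : ℝ :=
  2 * t * (1 - t) / (3 - 2 * t) + 2 * (1 - t) ^ 2 / (1 + 2 * t)

lemma nA_nonneg {t : ℝ} (h0 : 0 ≤ t) (h1 : t ≤ 1) : 0 ≤ nA t := by
  unfold nA
  have : (0:ℝ) < 3 - 2 * t := by linarith
  have : (0:ℝ) < 1 + 2 * t := by linarith
  have : 0 ≤ 1 - t := by linarith
  positivity

lemma nB_nonneg {t : ℝ} (h0 : 0 ≤ t) (h1 : t ≤ 1) : 0 ≤ nB t := by
  unfold nB
  have : (0:ℝ) < 3 - 2 * t := by linarith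
  have : (0:ℝ) < 1 + 2 * t := by linarith
  have : 0 ≤ 1 - t := by linarith
  positivity

lemma contA : ContinuousOn nA (Set.Icc (0:ℝ) 1) := by
  unfold nA
  apply ContinuousOn.add
  · exact ContinuousOn.div (by fun_prop) (by fun_prop)
      (fun t ht => by have := ht.2; intro h; nlinarith)
  · exact ContinuousOn.div (by fun_prop) (by fun_prop)
      (fun t ht => by have := ht.1; intro h; nlinarith)

lemma contB : ContinuousOn nB (Set.Icc (0:ℝ) 1) := by
  unfold nB
  apply ContinuousOn.add
  · exact ContinuousOn.div (by fun_prop) (by fun_prop)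
      (fun t ht => by have := ht.2; intro h; nlinarith)
  · exact ContinuousOn.div (by fun_prop) (by fun_prop)
      (fun t ht => by have := ht.1; intro h; nlinarith)

lemma aux_deriv (c₀ c₁ c₂ α β γ δ t : ℝ) (h1 : (3:ℝ) - 2 * t ≠ 0) (h2 : (1:ℝ) + 2 * t ≠ 0) :
    HasDerivAt (fun s : ℝ => c₀ * s + c₁ * s ^ 2 + c₂ * s ^ 3 + α * Real.log (3 - 2 * s) +
        β * Real.log (1 + 2 * s) + γ * (3 - 2 * s)⁻¹ + δ * (1 + 2 * s)⁻¹)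
      (c₀ + 2 * c₁ * t + 3 * c₂ * t ^ 2 - 2 * α / (3 - 2 * t) + 2 * β / (1 + 2 * t) +
        2 * γ / (3 - 2 * t) ^ 2 - 2 * δ / (1 + 2 * t) ^ 2) t := by
  have hu : HasDerivAt (fun s : ℝ => 3 - 2 * s) (-2) t := by
    exact (((hasDerivAt_id' t).const_mul (2:ℝ)).const_sub 3).congr_deriv (by ring)
  have hv : HasDerivAt (fun s : ℝ => 1 + 2 * s) 2 t := by
    exact (((hasDerivAt_id' t).const_mul (2:ℝ)).const_add 1).congr_deriv (by ring)
  have h₀ : HasDerivAt (fun s : ℝ => c₀ * s) c₀ t := by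
    simpa using (hasDerivAt_id t).const_mul c₀
  have h₁ : HasDerivAt (fun s : ℝ => c₁ * s ^ 2) (c₁ * (2 * t ^ 1)) t := by
    simpa using (hasDerivAt_pow 2 t).const_mul c₁
  have h₂ : HasDerivAt (fun s : ℝ => c₂ * s ^ 3) (c₂ * (3 * t ^ 2)) t := by
    simpa using (hasDerivAt_pow 3 t).const_mul c₂
  have H := (((((h₀.add h₁).add h₂).add ((hu.log h1).const_mul α)).add
      ((hv.log h2).const_mul β)).add ((hu.inv h1).const_mul γ)).add ((hv.inv h2).const_mul δ)
  refine H.congr_deriv ?_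
  field_simp
  ring

lemma integrable_A2 : IntervalIntegrable (fun t => nA t ^ 2) MeasureTheory.volume 0 1 := by
  apply ContinuousOn.intervalIntegrable
  rw [Set.uIcc_of_le (by norm_num : (0:ℝ) ≤ 1)]
  exact contA.pow 2

lemma integrable_B2 : IntervalIntegrable (fun t => nB t ^ 2) MeasureTheory.volume 0 1 := by
  apply ContinuousOn.intervalIntegrable
  rw [Set.uIcc_of_le (by norm_num : (0:ℝ) ≤ 1)]
  exact contB.pow 2

lemma integrable_AB : IntervalIntegrable (fun t => nA t * nB t) MeasureTheory.volume 0 1 := by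
  apply ContinuousOn.intervalIntegrable
  rw [Set.uIcc_of_le (by norm_num : (0:ℝ) ≤ 1)]
  exact contA.mul contB

lemma den_ne {t : ℝ} (ht : t ∈ Set.uIcc (0:ℝ) 1) :
    (3:ℝ) - 2 * t ≠ 0 ∧ (1:ℝ) + 2 * t ≠ 0 := by
  rw [Set.uIcc_of_le (by norm_num : (0:ℝ) ≤ 1)] at ht
  constructor <;> [skip; skip] <;> · have h1 := ht.1; have h2 := ht.2; intro h; nlinarith

lemma intA2 : ∫ t in (0:ℝ)..1, nA t ^ 2 = 125 / 6 - 147 / 8 * Real.log 3 := by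
  rw [intervalIntegral.integral_eq_sub_of_hasDerivAt
    (f := fun s : ℝ => 12 * s + 0 * s ^ 2 + (4/3) * s ^ 3 + (243/16) * Real.log (3 - 2 * s) +
      (-(51/16)) * Real.log (1 + 2 * s) + (81/8) * (3 - 2 * s)⁻¹ + (-(9/8)) * (1 + 2 * s)⁻¹)
    (fun t ht => by
      obtain ⟨h1, h2⟩ := den_ne ht
      have H := aux_deriv 12 0 (4/3) (243/16) (-(51/16)) (81/8) (-(9/8)) t h1 h2
      refine H.congr_deriv ?_
      unfold nA
      field_simp
      ring) integrable_A2]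
  norm_num [Real.log_one]
  ring

lemma intB2 : ∫ t in (0:ℝ)..1, nB t ^ 2 = 125 / 6 - 147 / 8 * Real.log 3 := by
  rw [intervalIntegral.integral_eq_sub_of_hasDerivAt
    (f := fun s : ℝ => 16 * s + (-4) * s ^ 2 + (4/3) * s ^ 3 + (51/16) * Real.log (3 - 2 * s) +
      (-(243/16)) * Real.log (1 + 2 * s) + (9/8) * (3 - 2 * s)⁻¹ + (-(81/8)) * (1 + 2 * s)⁻¹)
    (fun t ht => by
      obtain ⟨h1, h2⟩ := den_ne ht
      have H := aux_deriv 16 (-4) (4/3) (51/16) (-(243/16)) (9/8) (-(81/8)) t h1 h2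
      refine H.congr_deriv ?_
      unfold nB
      field_simp
      ring) integrable_B2]
  norm_num [Real.log_one]
  ring

lemma intAB : ∫ t in (0:ℝ)..1, nA t * nB t = -(95 / 6) + 117 / 8 * Real.log 3 := by
  rw [intervalIntegral.integral_eq_sub_of_hasDerivAt
    (f := fun s : ℝ => (-12) * s + 2 * s ^ 2 + (-(4/3)) * s ^ 3 +
      (-(117/16)) * Real.log (3 - 2 * s) +
      (117/16) * Real.log (1 + 2 * s) + (-(27/8)) * (3 - 2 * s)⁻¹ + (27/8) * (1 + 2 * s)⁻¹)
    (fun t ht => by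
      obtain ⟨h1, h2⟩ := den_ne ht
      have H := aux_deriv (-12) 2 (-(4/3)) (-(117/16)) (117/16) (-(27/8)) (27/8) t h1 h2
      refine H.congr_deriv ?_
      unfold nA nB
      field_simp
      ring) integrable_AB]
  norm_num [Real.log_one]
  ring

theorem nesbitt_convex_product_similarly_ordered (a b : ℝ) (hab : a < b)
    (f g : ℝ → ℝ)
    (hf0 : ∀ x ∈ Set.Icc a b, 0 ≤ f x)
    (hg0 : ∀ x ∈ Set.Icc a b, 0 ≤ g x)
    (hf : ∀ x ∈ Set.Icc a b, ∀ y ∈ Set.Icc a b, ∀ t : ℝ, 0 < t → t ≤ 1 →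
      f (t * x + (1 - t) * y) ≤
        (2 * t ^ 2 / (3 - 2 * t) + 2 * t * (1 - t) / (1 + 2 * t)) * f x +
        (2 * t * (1 - t) / (3 - 2 * t) + 2 * (1 - t) ^ 2 / (1 + 2 * t)) * f y)
    (hg : ∀ x ∈ Set.Icc a b, ∀ y ∈ Set.Icc a b, ∀ t : ℝ, 0 < t → t ≤ 1 →
      g (t * x + (1 - t) * y) ≤
        (2 * t ^ 2 / (3 - 2 * t) + 2 * t * (1 - t) / (1 + 2 * t)) * g x +
        (2 * t * (1 - t) / (3 - 2 * t) + 2 * (1 - t) ^ 2 / (1 + 2 * t)) * g y)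
    (hint : IntervalIntegrable (fun x => f x * g x) MeasureTheory.volume a b)
    (hord : f a * g b + f b * g a ≤ f a * g a + f b * g b) :
    (1 / (b - a)) * ∫ x in a..b, f x * g x ≤
      (5 - (15 / 4) * Real.log 3) * (f a * g a + f b * g b) := by
  have hba : (0:ℝ) < b - a := by linarith
  have hba' : b - a ≠ 0 := ne_of_gt hba
  set P := f b * g b with hP
  set Q := f a * g a with hQ
  set ψ : ℝ → ℝ := fun s => nA s ^ 2 * P + nB s ^ 2 * Q + nA s * nB s * (Q + P) with hψ
  -- pointwise bound
  have key : ∀ x ∈ Set.Icc a b, f x * g x ≤ ψ (x / (b - a) - a / (b - a)) := by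
    intro x hx
    set t := x / (b - a) - a / (b - a) with htdef
    have ht0 : 0 ≤ t := by
      rw [htdef, div_sub_div_same]
      exact div_nonneg (by linarith [hx.1]) (le_of_lt hba)
    have ht1 : t ≤ 1 := by
      rw [htdef, div_sub_div_same]
      exact (div_le_one hba).2 (by linarith [hx.2])
    have hxt : t * b + (1 - t) * a = x := by
      rw [htdef]; field_simp; ring
    have hA := nA_nonneg ht0 ht1
    have hB := nB_nonneg ht0 ht1
    have haI : a ∈ Set.Icc a b := Set.left_mem_Icc.2 (le_of_lt hab)
    have hbI : b ∈ Set.Icc a b := Set.right_mem_Icc.2 (le_of_lt hab)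
    have hfx : f x ≤ nA t * f b + nB t * f a := by
      rcases eq_or_lt_of_le ht0 with h | h
      · have hxa : x = a := by rw [← hxt, ← h]; ring
        have : nA t = 0 ∧ nB t = 2 := by rw [← h]; constructor <;> norm_num [nA, nB]
        rw [hxa, this.1, this.2]
        nlinarith [hf0 a haI]
      · have := hf b hbI a haI t h ht1
        rw [hxt] at this
        simpa [nA, nB] using this
    have hgx : g x ≤ nA t * g b + nB t * g a := by
      rcases eq_or_lt_of_le ht0 with h | h
      · have hxa : x = a := by rw [← hxt, ← h]; ring
        have : nA t = 0 ∧ nB t = 2 := by rw [← h]; constructor <;> norm_num [nA, nB]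
        rw [hxa, this.1, this.2]
        nlinarith [hg0 a haI]
      · have := hg b hbI a haI t h ht1
        rw [hxt] at this
        simpa [nA, nB] using this
    have h1 : f x * g x ≤ (nA t * f b + nB t * f a) * (nA t * g b + nB t * g a) :=
      mul_le_mul hfx hgx (hg0 x hx)
        (add_nonneg (mul_nonneg hA (hf0 b hbI)) (mul_nonneg hB (hf0 a haI)))
    calc f x * g x ≤ (nA t * f b + nB t * f a) * (nA t * g b + nB t * g a) := h1
      _ = nA t ^ 2 * P + nB t ^ 2 * Q + nA t * nB t * (f a * g b + f b * g a) := by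
          rw [hP, hQ]; ring
      _ ≤ ψ t := by
          have h2 := mul_le_mul_of_nonneg_left hord (mul_nonneg hA hB)
          simp only [hψ]
          linarith
  -- integrability of the composed majorant
  have hcomp : IntervalIntegrable (fun x => ψ (x / (b - a) - a / (b - a)))
      MeasureTheory.volume a b := by
    apply ContinuousOn.intervalIntegrable
    have hψc : ContinuousOn ψ (Set.Icc (0:ℝ) 1) := by
      apply ContinuousOn.add
      apply ContinuousOn.add
      · exact (contA.pow 2).mul continuousOn_const
      · exact (contB.pow 2).mul continuousOn_const
      · exact (contA.mul contB).mul continuousOn_const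
    rw [Set.uIcc_of_le (le_of_lt hab)]
    apply hψc.comp (by fun_prop)
    intro x hx
    constructor
    · show (0:ℝ) ≤ x / (b - a) - a / (b - a)
      rw [div_sub_div_same]; exact div_nonneg (by linarith [hx.1]) (le_of_lt hba)
    · show x / (b - a) - a / (b - a) ≤ 1
      rw [div_sub_div_same]; exact (div_le_one hba).2 (by linarith [hx.2])
  have hmono := intervalIntegral.integral_mono_on (le_of_lt hab) hint hcomp key
  -- compute the majorant integral
  have hval : (∫ x in a..b, ψ (x / (b - a) - a / (b - a))) =
      (b - a) * ((5 - (15 / 4) * Real.log 3) * (Q + P)) := by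
    rw [intervalIntegral.integral_comp_div_sub ψ hba' (a / (b - a))]
    rw [show a / (b - a) - a / (b - a) = 0 by ring, show b / (b - a) - a / (b - a) = 1 by
      field_simp]
    rw [smul_eq_mul]
    congr 1
    rw [hψ]
    rw [intervalIntegral.integral_add (((integrable_A2.mul_const P).add
        (integrable_B2.mul_const Q))) (integrable_AB.mul_const (Q + P)),
      intervalIntegral.integral_add (integrable_A2.mul_const P) (integrable_B2.mul_const Q),
      intervalIntegral.integral_mul_const, intervalIntegral.integral_mul_const,
      intervalIntegral.integral_mul_const, intA2, intB2, intAB]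
    ring
  calc (1 / (b - a)) * ∫ x in a..b, f x * g x
      ≤ (1 / (b - a)) * ∫ x in a..b, ψ (x / (b - a) - a / (b - a)) := by
        apply mul_le_mul_of_nonneg_left hmono
        positivity
    _ = (5 - (15 / 4) * Real.log 3) * (f a * g a + f b * g b) := by
        rw [hval, hP, hQ]; field_simp
end

section
/- Let a < b be real numbers and let f, g : [a, b] → [0, ∞) be Nesbitt-convex functions on [a, b]. Then ∫₀¹ f(ta + (1−t)b) g(ta + (1−t)b) dt ≤ (125/6 − (147/8) ln 3) · ( f(a)g(a) + f(b)g(b) ) + ((117/8) ln 3 − 95/6) · ( f(a)g(b) + f(b)g(a) ), provided the function t ↦ f(ta + (1−t)b)g(ta + (1−t)b) is integrable on [0, 1]. -/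
set_option maxHeartbeats 1000000

open Real intervalIntegral

/-- Generic antiderivative lemma for our partial-fraction form. -/
lemma nesbitt_hasDerivAt (A B C D p1 p2 p3 : ℝ) (t : ℝ)
    (h3 : (3:ℝ) - 2*t ≠ 0) (h1 : (1:ℝ) + 2*t ≠ 0) :
    HasDerivAt (fun s : ℝ => p1*s + p2*s^2 + p3*s^3 + A*Real.log (3-2*s)
        + B*Real.log (1+2*s) + C*(3-2*s)⁻¹ + D*(1+2*s)⁻¹)
      (p1 + 2*p2*t + 3*p3*t^2 + A*(-2/(3-2*t)) + B*(2/(1+2*t))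
        + C*(2/(3-2*t)^2) + D*(-2/(1+2*t)^2)) t := by
  have ht3 : HasDerivAt (fun s : ℝ => 3 - 2*s) (-2) t := by
    simpa [Pi.sub_def] using (hasDerivAt_const t (3:ℝ)).sub ((hasDerivAt_id t).const_mul 2)
  have ht1 : HasDerivAt (fun s : ℝ => 1 + 2*s) 2 t := by
    simpa [Pi.add_def] using (hasDerivAt_const t (1:ℝ)).add ((hasDerivAt_id t).const_mul 2)
  have hl3 : HasDerivAt (fun s : ℝ => Real.log (3-2*s)) (-2/(3-2*t)) t := ht3.log h3
  have hl1 : HasDerivAt (fun s : ℝ => Real.log (1+2*s)) (2/(1+2*t)) t := ht1.log h1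
  have hi3 : HasDerivAt (fun s : ℝ => (3-2*s)⁻¹) (2/(3-2*t)^2) t := by
    simpa [neg_div, Pi.inv_def] using ht3.inv h3
  have hi1 : HasDerivAt (fun s : ℝ => (1+2*s)⁻¹) (-2/(1+2*t)^2) t := by
    simpa [neg_div, Pi.inv_def] using ht1.inv h1
  have hp1 : HasDerivAt (fun s : ℝ => p1*s) p1 t := by
    simpa using (hasDerivAt_id t).const_mul p1
  have hp2 : HasDerivAt (fun s : ℝ => p2*s^2) (2*p2*t) t := by
    have := (hasDerivAt_pow 2 t).const_mul p2
    simpa [mul_comm, mul_assoc, mul_left_comm] using this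
  have hp3 : HasDerivAt (fun s : ℝ => p3*s^3) (3*p3*t^2) t := by
    have := (hasDerivAt_pow 3 t).const_mul p3
    simpa [mul_comm, mul_assoc, mul_left_comm] using this
  exact (((((hp1.add hp2).add hp3).add (hl3.const_mul A)).add
    (hl1.const_mul B)).add (hi3.const_mul C)).add (hi1.const_mul D)

theorem nesbitt_convex_product_key_estimate (a b : ℝ) (hab : a < b)
    (f g : ℝ → ℝ)
    (hf0 : ∀ x ∈ Set.Icc a b, 0 ≤ f x)
    (hg0 : ∀ x ∈ Set.Icc a b, 0 ≤ g x)
    (hf : ∀ x ∈ Set.Icc a b, ∀ y ∈ Set.Icc a b, ∀ t : ℝ, 0 < t → t ≤ 1 →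
      f (t * x + (1 - t) * y) ≤
        (2 * t ^ 2 / (3 - 2 * t) + 2 * t * (1 - t) / (1 + 2 * t)) * f x +
        (2 * t * (1 - t) / (3 - 2 * t) + 2 * (1 - t) ^ 2 / (1 + 2 * t)) * f y)
    (hg : ∀ x ∈ Set.Icc a b, ∀ y ∈ Set.Icc a b, ∀ t : ℝ, 0 < t → t ≤ 1 →
      g (t * x + (1 - t) * y) ≤
        (2 * t ^ 2 / (3 - 2 * t) + 2 * t * (1 - t) / (1 + 2 * t)) * g x +
        (2 * t * (1 - t) / (3 - 2 * t) + 2 * (1 - t) ^ 2 / (1 + 2 * t)) * g y)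
    (hint : IntervalIntegrable
      (fun t => f (t * a + (1 - t) * b) * g (t * a + (1 - t) * b)) MeasureTheory.volume 0 1) :
    (∫ t in (0 : ℝ)..1, f (t * a + (1 - t) * b) * g (t * a + (1 - t) * b)) ≤
      (125 / 6 - (147 / 8) * Real.log 3) * (f a * g a + f b * g b) +
      ((117 / 8) * Real.log 3 - 95 / 6) * (f a * g b + f b * g a) := by
  have ha : a ∈ Set.Icc a b := ⟨le_refl a, hab.le⟩
  have hb : b ∈ Set.Icc a b := ⟨hab.le, le_refl b⟩
  have hfa := hf0 a ha; have hfb := hf0 b hb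
  have hga := hg0 a ha; have hgb := hg0 b hb
  set P : ℝ → ℝ := fun t => 2 * t ^ 2 / (3 - 2 * t) + 2 * t * (1 - t) / (1 + 2 * t) with hP
  set Q : ℝ → ℝ := fun t => 2 * t * (1 - t) / (3 - 2 * t) + 2 * (1 - t) ^ 2 / (1 + 2 * t) with hQ
  set H : ℝ → ℝ := fun t => (P t * f a + Q t * f b) * (P t * g a + Q t * g b) with hH
  -- denominators are nonzero on [0,1]
  have hden : ∀ t : ℝ, t ∈ Set.Icc (0:ℝ) 1 → (0:ℝ) < 3 - 2*t ∧ (0:ℝ) < 1 + 2*t := by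
    intro t ht; constructor <;> nlinarith [ht.1, ht.2]
  -- pointwise bound
  have hpt : ∀ t ∈ Set.Icc (0:ℝ) 1,
      f (t * a + (1 - t) * b) * g (t * a + (1 - t) * b) ≤ H t := by
    intro t ht
    obtain ⟨h3, h1⟩ := hden t ht
    have hPnn : 0 ≤ P t := by
      apply add_nonneg <;> apply div_nonneg <;> nlinarith [ht.1, ht.2]
    have hQnn : 0 ≤ Q t := by
      apply add_nonneg <;> apply div_nonneg <;> nlinarith [ht.1, ht.2]
    rcases eq_or_lt_of_le ht.1 with h0 | h0
    · -- t = 0 : P 0 = 0, Q 0 = 2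
      subst h0
      have hP0 : P 0 = 0 := by simp [hP]
      have hQ0 : Q 0 = 2 := by norm_num [hQ]
      simp only [hH, hP0, hQ0]
      norm_num
      nlinarith [hfb, hgb]
    · have hmem : t * a + (1 - t) * b ∈ Set.Icc a b := by
        constructor <;> nlinarith [ht.1, ht.2, hab.le]
      have hfx := hf a ha b hb t h0 ht.2
      have hgx := hg a ha b hb t h0 ht.2
      have hgx0 := hg0 _ hmem
      have hbnd : 0 ≤ P t * f a + Q t * f b := by positivity
      calc f (t * a + (1 - t) * b) * g (t * a + (1 - t) * b)
          ≤ (P t * f a + Q t * f b) * (P t * g a + Q t * g b) :=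
            mul_le_mul hfx hgx hgx0 hbnd
        _ = H t := rfl
  -- continuity of H on [0,1]
  have hcont : ContinuousOn H (Set.Icc (0:ℝ) 1) := by
    have c3 : ∀ t ∈ Set.Icc (0:ℝ) 1, (3:ℝ) - 2*t ≠ 0 := fun t ht => (hden t ht).1.ne'
    have c1 : ∀ t ∈ Set.Icc (0:ℝ) 1, (1:ℝ) + 2*t ≠ 0 := fun t ht => (hden t ht).2.ne'
    have hPc : ContinuousOn P (Set.Icc (0:ℝ) 1) :=
      ((continuousOn_const.mul (continuousOn_pow 2)).div
        (continuousOn_const.sub (continuousOn_const.mul continuousOn_id)) c3).add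
      (((continuousOn_const.mul continuousOn_id).mul
        (continuousOn_const.sub continuousOn_id)).div
        (continuousOn_const.add (continuousOn_const.mul continuousOn_id)) c1)
    have hQc : ContinuousOn Q (Set.Icc (0:ℝ) 1) :=
      (((continuousOn_const.mul continuousOn_id).mul
        (continuousOn_const.sub continuousOn_id)).div
        (continuousOn_const.sub (continuousOn_const.mul continuousOn_id)) c3).add
      ((continuousOn_const.mul ((continuousOn_const.sub continuousOn_id).pow 2)).div
        (continuousOn_const.add (continuousOn_const.mul continuousOn_id)) c1)
    exact ((hPc.mul continuousOn_const).add (hQc.mul continuousOn_const)).mul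
      ((hPc.mul continuousOn_const).add (hQc.mul continuousOn_const))
  have hHint : IntervalIntegrable H MeasureTheory.volume 0 1 := by
    apply ContinuousOn.intervalIntegrable
    rwa [Set.uIcc_of_le (by norm_num : (0:ℝ) ≤ 1)]
  -- step: integral monotone
  have hmono : (∫ t in (0:ℝ)..1, f (t * a + (1 - t) * b) * g (t * a + (1 - t) * b))
      ≤ ∫ t in (0:ℝ)..1, H t :=
    intervalIntegral.integral_mono_on (by norm_num) hint hHint hpt
  -- step: compute ∫ H via explicit antiderivative
  set c1 : ℝ := f a * g a with hc1
  set c2 : ℝ := f b * g b with hc2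
  set c3 : ℝ := f a * g b + f b * g a with hc3
  set G : ℝ → ℝ := fun s => (12*c1+16*c2-12*c3)*s + (-4*c2+2*c3)*s^2 + (4/3*c1+4/3*c2-4/3*c3)*s^3
        + (243/16*c1+51/16*c2-117/16*c3)*Real.log (3-2*s)
        + (-51/16*c1-243/16*c2+117/16*c3)*Real.log (1+2*s)
        + (81/8*c1+9/8*c2-27/8*c3)*(3-2*s)⁻¹
        + (-9/8*c1-81/8*c2+27/8*c3)*(1+2*s)⁻¹ with hG
  have hftc : (∫ t in (0:ℝ)..1, H t) = G 1 - G 0 := by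
    apply intervalIntegral.integral_eq_sub_of_hasDerivAt _ hHint
    intro t ht
    rw [Set.uIcc_of_le (by norm_num : (0:ℝ) ≤ 1)] at ht
    obtain ⟨h3, h1⟩ := hden t ht
    have hd := nesbitt_hasDerivAt (243/16*c1+51/16*c2-117/16*c3)
      (-51/16*c1-243/16*c2+117/16*c3) (81/8*c1+9/8*c2-27/8*c3)
      (-9/8*c1-81/8*c2+27/8*c3) (12*c1+16*c2-12*c3) (-4*c2+2*c3)
      (4/3*c1+4/3*c2-4/3*c3) t h3.ne' h1.ne'
    convert hd using 1
    · rfl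
    · rfl
    simp only [hH, hP, hQ, hc1, hc2, hc3]
    field_simp
    ring
  rw [hftc] at hmono
  simp only [hG] at hmono
  refine hmono.trans_eq ?_
  have hl1 : Real.log (3 - 2*(1:ℝ)) = 0 := by norm_num
  have hl2 : Real.log (1 + 2*(0:ℝ)) = 0 := by norm_num
  have hl3 : (3:ℝ) - 2*(0:ℝ) = 3 := by norm_num
  have hl4 : (1:ℝ) + 2*(1:ℝ) = 3 := by norm_num
  simp only [hl3, hl4, hl1, hl2]
  simp only [hc1, hc2, hc3]
  norm_num
  ring
end
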